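/- In the gadget hypergraph G_e on an edge e of size k, any set of edges of G_e covering all 2k−2 added vertices v_i^± has size at least k−1, and if it has size exactly k−1 then it equals the set of inner edges. -/
import Mathlib


/-- Vertices of the gadget: `vO i` are the original vertices `vᵢ` of the edge `e`,
`vP i` are the added vertices `vᵢ⁺`, `vM i` are the added vertices `vᵢ⁻`. -/
abbrev GVert := ℕ ⊕ (ℕ ⊕ ℕ)

def vO (i : ℕ) : GVert := Sum.inl i
def vP (i : ℕ) : GVert := Sum.inr (Sum.inl i)
def vM (i : ℕ) : GVert := Sum.inr (Sum.inr i)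

/-- The inner edge `{vᵢ⁺, vᵢ₊₁⁻}`. -/
def innerE (i : ℕ) : Finset GVert := {vP i, vM (i + 1)}

/-- The outer edges: `{v₁, v₁⁺}`, `{v_k, v_k⁻}`, and `{vᵢ, vᵢ⁻, vᵢ⁺}` for `2 ≤ i ≤ k-1`. -/
def outerE (k i : ℕ) : Finset GVert :=
  if i = 1 then {vO 1, vP 1} else if i = k then {vO k, vM k} else {vO i, vM i, vP i}

/-- The set of the `k-1` inner edges of the gadget. -/
def Inners (k : ℕ) : Set (Finset GVert) := {e | ∃ i, 1 ≤ i ∧ i ≤ k - 1 ∧ e = innerE i}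

/-- The set of the `k` outer edges of the gadget. -/
def Outers (k : ℕ) : Set (Finset GVert) := {e | ∃ i, 1 ≤ i ∧ i ≤ k ∧ e = outerE k i}

/-- The edge set of the gadget `G_e` on an edge of size `k`. -/
def GadgetEdges (k : ℕ) : Set (Finset GVert) := Inners k ∪ Outers k

/-- A matching of the gadget: a set of pairwise disjoint edges of `G_e`. -/
def IsGadgetMatching (k : ℕ) (M : Set (Finset GVert)) : Prop :=
  M ⊆ GadgetEdges k ∧ M.Pairwise fun a b => Disjoint a b

lemma vP_mem_innerE {j i : ℕ} : vP j ∈ innerE i ↔ j = i := by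
  simp [innerE, vP, vM]

lemma vM_mem_innerE {m i : ℕ} : vM m ∈ innerE i ↔ m = i + 1 := by
  simp [innerE, vP, vM]

lemma vO_notMem_innerE {a i : ℕ} : vO a ∉ innerE i := by
  simp [innerE, vO, vP, vM]

lemma vO_mem_outerE {k a i : ℕ} : vO a ∈ outerE k i ↔ a = i := by
  unfold outerE
  split_ifs with h1 h2 <;> simp [vO, vP, vM] <;> omega

lemma vP_mem_outerE {k j i : ℕ} (hk : 2 ≤ k) : vP j ∈ outerE k i ↔ j = i ∧ i ≠ k := by
  unfold outerE
  split_ifs with h1 h2 <;> simp [vO, vP, vM] <;> omega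

lemma vM_mem_outerE {k m i : ℕ} : vM m ∈ outerE k i ↔ m = i ∧ i ≠ 1 := by
  unfold outerE
  split_ifs with h1 h2 <;> simp [vO, vP, vM] <;> omega

lemma innerE_ne_outerE {a k b : ℕ} : innerE a ≠ outerE k b := by
  intro h
  have : vO b ∈ innerE a := h ▸ vO_mem_outerE.mpr rfl
  exact vO_notMem_innerE this

lemma mem_gadget_iff {k : ℕ} {e : Finset GVert} :
    e ∈ GadgetEdges k ↔ (∃ i, 1 ≤ i ∧ i ≤ k - 1 ∧ e = innerE i) ∨
      (∃ i, 1 ≤ i ∧ i ≤ k ∧ e = outerE k i) := by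
  simp [GadgetEdges, Inners, Outers]

/-- Each gadget edge contains at most one `vP`. -/
lemma vP_unique {k a b : ℕ} {e : Finset GVert} (hk : 2 ≤ k) (he : e ∈ GadgetEdges k)
    (ha : vP a ∈ e) (hb : vP b ∈ e) : a = b := by
  rw [mem_gadget_iff] at he
  rcases he with ⟨i, _, _, rfl⟩ | ⟨i, _, _, rfl⟩
  · rw [vP_mem_innerE] at ha hb; omega
  · rw [vP_mem_outerE hk] at ha hb; omega

/-- A gadget edge containing both `vP j` and `vM m`. -/
lemma vP_vM_mem {k j m : ℕ} {e : Finset GVert} (hk : 2 ≤ k) (he : e ∈ GadgetEdges k)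
    (hj : vP j ∈ e) (hm : vM m ∈ e) :
    (e = innerE j ∧ m = j + 1) ∨ (e = outerE k j ∧ m = j ∧ 2 ≤ j ∧ j ≠ k) := by
  rw [mem_gadget_iff] at he
  rcases he with ⟨i, _, _, rfl⟩ | ⟨i, hi1, _, rfl⟩
  · rw [vP_mem_innerE] at hj
    rw [vM_mem_innerE] at hm
    subst hj; exact Or.inl ⟨rfl, hm⟩
  · rw [vP_mem_outerE hk] at hj
    rw [vM_mem_outerE] at hm
    obtain ⟨rfl, hik⟩ := hj
    exact Or.inr ⟨rfl, hm.1, by omega, hik⟩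

lemma gadget_finite (k : ℕ) : (GadgetEdges k).Finite := by
  apply Set.Finite.union
  · apply Set.Finite.subset ((Set.finite_Icc 1 (k - 1)).image innerE)
    rintro e ⟨i, h1, h2, rfl⟩
    exact ⟨i, ⟨h1, h2⟩, rfl⟩
  · apply Set.Finite.subset ((Set.finite_Icc 1 k).image (outerE k))
    rintro e ⟨i, h1, h2, rfl⟩
    exact ⟨i, ⟨h1, h2⟩, rfl⟩

/-- Any set of edges of the gadget `G_e` covering all `2k-2` added vertices `vᵢ±` has
size at least `k-1`, and if it has size exactly `k-1` then it is the set of inner edges. -/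
theorem stmt_10 (k : ℕ) (hk : 2 ≤ k) (C : Set (Finset GVert)) (hC : C ⊆ GadgetEdges k)
    (hcovP : ∀ i, 1 ≤ i → i ≤ k - 1 → ∃ e ∈ C, vP i ∈ e)
    (hcovM : ∀ i, 2 ≤ i → i ≤ k → ∃ e ∈ C, vM i ∈ e) :
    k - 1 ≤ C.ncard ∧ (C.ncard = k - 1 → C = Inners k) := by
  classical
  have hCfin : C.Finite := (gadget_finite k).subset hC
  -- choose, for each `i`, an edge of `C` containing `vP i`
  have hcov' : ∀ i, ∃ e : Finset GVert, 1 ≤ i → i ≤ k - 1 → e ∈ C ∧ vP i ∈ e := by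
    intro i
    by_cases h : 1 ≤ i ∧ i ≤ k - 1
    · obtain ⟨e, he, hve⟩ := hcovP i h.1 h.2
      exact ⟨e, fun _ _ => ⟨he, hve⟩⟩
    · exact ⟨∅, fun a b => absurd ⟨a, b⟩ h⟩
  choose f hf using hcov'
  have hinj : Set.InjOn f ↑(Finset.Icc 1 (k - 1)) := by
    intro a ha b hb hab
    simp only [Finset.coe_Icc, Set.mem_Icc] at ha hb
    have h1 := hf a ha.1 ha.2
    have h2 := hf b hb.1 hb.2
    exact vP_unique hk (hC h1.1) h1.2 (hab ▸ h2.2)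
  set T : Finset (Finset GVert) := Finset.image f (Finset.Icc 1 (k - 1)) with hT
  have hTcard : T.card = k - 1 := by
    rw [hT, Finset.card_image_of_injOn hinj, Nat.card_Icc]
    omega
  have hTsub : ↑T ⊆ C := by
    intro e he
    simp only [hT, Finset.coe_image, Set.mem_image, Finset.mem_coe, Finset.mem_Icc] at he
    obtain ⟨i, ⟨h1, h2⟩, rfl⟩ := he
    exact (hf i h1 h2).1
  have hle : k - 1 ≤ C.ncard := by
    calc k - 1 = T.card := hTcard.symm
    _ = (↑T : Set (Finset GVert)).ncard := (Set.ncard_coe_finset T).symm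
    _ ≤ C.ncard := Set.ncard_le_ncard hTsub hCfin
  refine ⟨hle, fun hcard => ?_⟩
  have hTC : (↑T : Set (Finset GVert)) = C :=
    Set.eq_of_subset_of_ncard_le hTsub (by rw [hcard, Set.ncard_coe_finset, hTcard]) hCfin
  -- downward induction: each chosen edge is the inner edge
  have key : ∀ n i, 1 ≤ i → i ≤ k - 1 → k - 1 - i ≤ n → f i = innerE i := by
    intro n
    induction n with
    | zero =>
      intro i h1 h2 h3
      obtain ⟨e, heC, hme⟩ := hcovM (i + 1) (by omega) (by omega)
      rw [← hTC] at heC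
      simp only [hT, Finset.coe_image, Set.mem_image, Finset.mem_coe, Finset.mem_Icc] at heC
      obtain ⟨j, ⟨hj1, hj2⟩, rfl⟩ := heC
      have hje := hf j hj1 hj2
      rcases vP_vM_mem hk (hC hje.1) hje.2 hme with ⟨heq, hm⟩ | ⟨heq, hm, _, _⟩
      · have : j = i := by omega
        subst this; exact heq
      · omega
    | succ n ih =>
      intro i h1 h2 h3
      obtain ⟨e, heC, hme⟩ := hcovM (i + 1) (by omega) (by omega)
      rw [← hTC] at heC
      simp only [hT, Finset.coe_image, Set.mem_image, Finset.mem_coe, Finset.mem_Icc] at heC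
      obtain ⟨j, ⟨hj1, hj2⟩, rfl⟩ := heC
      have hje := hf j hj1 hj2
      rcases vP_vM_mem hk (hC hje.1) hje.2 hme with ⟨heq, hm⟩ | ⟨heq, hm, _, _⟩
      · have : j = i := by omega
        subst this; exact heq
      · have hji : f j = innerE j := ih j hj1 hj2 (by omega)
        rw [hji] at heq
        exact absurd heq innerE_ne_outerE
  have hfi : ∀ i, 1 ≤ i → i ≤ k - 1 → f i = innerE i :=
    fun i h1 h2 => key (k - 1 - i) i h1 h2 le_rfl
  rw [← hTC]
  ext e
  simp only [hT, Finset.coe_image, Set.mem_image, Finset.mem_coe, Finset.mem_Icc]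
  constructor
  · rintro ⟨i, ⟨h1, h2⟩, rfl⟩
    exact ⟨i, h1, h2, hfi i h1 h2⟩
  · rintro ⟨i, h1, h2, rfl⟩
    exact ⟨i, ⟨h1, h2⟩, hfi i h1 h2⟩
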